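/- Let n ∈ ℕ, n ≥ 1, α > 0, and let u ∈ Cⁿ(ℝ;ℝ) satisfy |u^{(ℓ)}(x)| ≤ c_ℓ (1+|x|)^{-α-ℓ} for all x ∈ ℝ and ℓ = 0,…,n. Then the Fourier transform û belongs to C^{n-1}(ℝ \ {0}), and there exists a constant C such that for every κ ∈ (0,1], sup_{|k| ≥ κ} |û^{(n-1)}(k)| ≤ C κ^{-2n+1}. -/

import Mathlib

/-!
For `k ≠ 0`, integrating by parts `n` times gives `û(k) = (ik)⁻ⁿ · (u⁽ⁿ⁾)^(k)`. Since `u⁽ⁿ⁾` decays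
like `|x|^(-α-n)` with `α > 0`, its moments of order `≤ n - 1` are integrable, so its Fourier
transform is `C^(n-1)` with bounded derivatives. By the Leibniz rule, the `(n-1)`-st derivative of
`k⁻ⁿ · (u⁽ⁿ⁾)^(k)` is then bounded by a combination of `|k|^(-n-i)`, `i ≤ n - 1`, each of which is
at most `κ^(-(2n-1))` when `κ ≤ |k|` and `κ ≤ 1`.
-/

open MeasureTheory

/-- The Fourier transform `û(k) = (2π)^{-1/2} ∫ e^{-ixk} u(x) dx` of a real function. -/
noncomputable def fourierHat (u : ℝ → ℝ) : ℝ → ℂ :=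
  fun k => (1 / Real.sqrt (2 * Real.pi) : ℝ) *
    ∫ x : ℝ, Complex.exp (-(Complex.I * (x : ℂ) * (k : ℂ))) * (u x : ℂ)

open Real Complex FourierTransform

lemma fourierHat_eq_fourier (v : ℝ → ℝ) (k : ℝ) :
    fourierHat v k = ((1 / √(2 * π) : ℝ) : ℂ) * 𝓕 (fun x => (v x : ℂ)) ((2 * π)⁻¹ * k) := by
  rw [fourierHat, Real.fourier_real_eq_integral_exp_smul]
  congr 2 with x
  rw [smul_eq_mul]
  congr 2
  push_cast
  field_simp

lemma fourierHat_of_not_integrable {v : ℝ → ℝ} (hv : AEStronglyMeasurable v)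
    (hv_int : ¬ Integrable v) : fourierHat v = 0 := by
  ext k
  rw [fourierHat, integral_undef, mul_zero, Pi.zero_apply]
  intro h
  refine hv_int ((integrable_norm_iff hv).1 ?_)
  simpa [norm_mul, Complex.norm_exp] using h.norm

lemma integrable_pow_mul_of_abs_le {φ : ℝ → ℝ} {C β : ℝ} (hφ : Continuous φ)
    (hb : ∀ x, |φ x| ≤ C * (1 + |x|) ^ (-β)) {j : ℕ} (hj : j + 1 < β) :
    Integrable (fun x => x ^ j * φ x) := by
  have hβ : ((Module.finrank ℝ ℝ : ℕ) : ℝ) < β - j := by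
    rw [Module.finrank_self, Nat.cast_one]
    linarith
  refine ((integrable_one_add_norm hβ).const_mul C).mono'
    ((continuous_pow j).mul hφ).aestronglyMeasurable (.of_forall fun x => ?_)
  have hx : (0 : ℝ) < 1 + |x| := by positivity
  calc ‖x ^ j * φ x‖ ≤ (1 + |x|) ^ (j : ℝ) * (C * (1 + |x|) ^ (-β)) := by
        rw [norm_mul, norm_pow, Real.norm_eq_abs, Real.rpow_natCast]
        gcongr
        · linarith
        · simpa using hb x
    _ = C * (1 + ‖x‖) ^ (-(β - j)) := by
        rw [Real.norm_eq_abs, neg_sub, sub_eq_add_neg, Real.rpow_add hx]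
        ring

lemma integrable_pow_mul_iteratedDeriv {u : ℝ → ℝ} {n : ℕ} {α : ℝ} {c : ℕ → ℝ}
    (hu : ContDiff ℝ n u)
    (hdecay : ∀ ℓ ≤ n, ∀ x : ℝ, |iteratedDeriv ℓ u x| ≤ c ℓ * (1 + |x|) ^ (-α - (ℓ : ℝ)))
    {ℓ j : ℕ} (hℓ : ℓ ≤ n) (hj : j + 1 < α + ℓ) :
    Integrable (fun x => x ^ j * iteratedDeriv ℓ u x) :=
  integrable_pow_mul_of_abs_le (hu.continuous_iteratedDeriv ℓ (by exact_mod_cast hℓ))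
    (fun x => by rw [neg_add']; exact hdecay ℓ hℓ x) hj

lemma iteratedDeriv_ofReal_comp {f : ℝ → ℝ} {n : ℕ} {x : ℝ} (hf : ContDiffAt ℝ n f x) :
    iteratedDeriv n (fun y => (f y : ℂ)) x = ((iteratedDeriv n f x : ℝ) : ℂ) := by
  simp only [iteratedDeriv_eq_iteratedFDeriv]
  rw [show (fun y => (f y : ℂ)) = ofRealCLM ∘ f from rfl,
    ofRealCLM.iteratedFDeriv_comp_left hf le_rfl]
  rfl

lemma fourierHat_iteratedDeriv {u : ℝ → ℝ} {n : ℕ} (hu : ContDiff ℝ n u)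
    (hint : ∀ m ≤ n, Integrable (iteratedDeriv m u)) (k : ℝ) :
    fourierHat (iteratedDeriv n u) k = (I * k) ^ n * fourierHat u k := by
  have hc : ∀ m ≤ n,
      iteratedDeriv m (fun x => (u x : ℂ)) = fun x => ((iteratedDeriv m u x : ℝ) : ℂ) :=
    fun m hm => funext fun x =>
      iteratedDeriv_ofReal_comp (hu.contDiffAt.of_le (by exact_mod_cast hm))
  have h := congrFun (Real.fourier_iteratedDeriv (f := fun x => (u x : ℂ)) (N := n)
    (ofRealCLM.contDiff.comp hu) (fun m hm => by
      rw [hc m (by exact_mod_cast hm)]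
      exact (hint m (by exact_mod_cast hm)).ofReal) le_rfl) ((2 * π)⁻¹ * k)
  rw [hc n le_rfl] at h
  rw [fourierHat_eq_fourier, fourierHat_eq_fourier, h, smul_eq_mul]
  push_cast
  field_simp

lemma fourierHat_eqOn_zpow_smul {u : ℝ → ℝ} {n : ℕ} (hu : ContDiff ℝ n u)
    (hint : ∀ m ≤ n, Integrable (iteratedDeriv m u)) :
    Set.EqOn (fourierHat u)
      (fun k => k ^ (-(n : ℤ)) • ((I ^ n)⁻¹ * fourierHat (iteratedDeriv n u) k)) {0}ᶜ := by
  intro k hk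
  have hk : (k : ℂ) ≠ 0 := ofReal_ne_zero.2 hk
  dsimp only
  rw [fourierHat_iteratedDeriv hu hint k, Complex.real_smul]
  push_cast
  rw [zpow_neg, zpow_natCast, mul_pow]
  field_simp

lemma norm_fourier_le_integral_norm {E : Type*} [NormedAddCommGroup E] [NormedSpace ℂ E]
    (f : ℝ → E) (w : ℝ) : ‖𝓕 f w‖ ≤ ∫ x, ‖f x‖ := by
  rw [Real.fourier_real_eq]
  refine (norm_integral_le_integral_norm _).trans (le_of_eq ?_)
  simp

section moments

variable {g : ℝ → ℝ} {N : ℕ}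

lemma contDiff_fourier_ofReal (hg : ∀ m ≤ N, Integrable (fun x => x ^ m * g x)) :
    ContDiff ℝ N (𝓕 fun x => (g x : ℂ)) :=
  Real.contDiff_fourier fun m hm => by
    simpa [abs_mul] using (hg m (by exact_mod_cast hm)).norm

lemma contDiff_fourierHat (hg : ∀ m ≤ N, Integrable (fun x => x ^ m * g x)) :
    ContDiff ℝ N (fourierHat g) := by
  rw [funext (fourierHat_eq_fourier g)]
  exact contDiff_const.mul ((contDiff_fourier_ofReal hg).comp (contDiff_const.mul contDiff_id))

lemma norm_iteratedDeriv_fourierHat_le (hg : ∀ m ≤ N, Integrable (fun x => x ^ m * g x))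
    {j : ℕ} (hj : j ≤ N) (k : ℝ) :
    ‖iteratedDeriv j (fourierHat g) k‖ ≤ 1 / √(2 * π) * ∫ x, |x ^ j * g x| := by
  have hgc : ∀ m : ℕ, (m : ℕ∞) ≤ N → Integrable (fun x : ℝ => x ^ m • (g x : ℂ)) :=
    fun m hm => by
    simpa [Complex.real_smul] using (hg m (by exact_mod_cast hm)).ofReal (𝕜 := ℂ)
  have hF : ContDiff ℝ j (𝓕 fun x => (g x : ℂ)) :=
    (contDiff_fourier_ofReal hg).of_le (by exact_mod_cast hj)
  rw [funext (fourierHat_eq_fourier g), iteratedDeriv_const_mul_field,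
    iteratedDeriv_comp_const_smul hF, Real.iteratedDeriv_fourier hgc (by exact_mod_cast hj)]
  rw [norm_mul, norm_smul, Complex.norm_real, Real.norm_of_nonneg (by positivity)]
  gcongr
  calc ‖(2 * π)⁻¹ ^ j‖ * ‖𝓕 (fun x : ℝ => (-2 * π * I * x) ^ j • (g x : ℂ)) ((2 * π)⁻¹ * k)‖
      ≤ ((2 * π)⁻¹) ^ j * ∫ x : ℝ, ‖(-2 * π * I * x) ^ j • (g x : ℂ)‖ := by
        rw [norm_pow, Real.norm_of_nonneg (by positivity)]
        gcongr
        exact norm_fourier_le_integral_norm _ _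
    _ = ∫ x, |x ^ j * g x| := by
        rw [← integral_const_mul]
        congr with x
        simp only [norm_smul, norm_pow, norm_mul, norm_neg, Complex.norm_real, Complex.norm_I,
          Complex.norm_ofNat, Real.norm_eq_abs, abs_mul, abs_pow]
        rw [abs_of_pos pi_pos, mul_one, ← mul_assoc, ← mul_pow, ← mul_assoc,
          inv_mul_cancel₀ (by positivity), one_mul]

end moments

lemma zpow_neg_le_of_le {κ x : ℝ} {m N : ℕ} (hκ0 : 0 < κ) (hκ1 : κ ≤ 1) (hx : κ ≤ x)
    (hm : m ≤ N) : x ^ (-(m : ℤ)) ≤ κ ^ (-(N : ℤ)) := by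
  rw [zpow_neg, zpow_neg, zpow_natCast, zpow_natCast]
  exact inv_anti₀ (pow_pos hκ0 _)
    ((pow_le_pow_of_le_one hκ0.le hκ1 hm).trans (pow_le_pow_left₀ hκ0.le hx m))

lemma contDiffOn_zpow_neg (n : ℕ) {N : WithTop ℕ∞} :
    ContDiffOn ℝ N (fun k : ℝ => k ^ (-(n : ℤ))) {0}ᶜ := by
  simp_rw [zpow_neg, zpow_natCast]
  exact (contDiff_id.pow n).contDiffOn.inv fun k hk => pow_ne_zero n hk

lemma exists_norm_iteratedDerivWithin_zpow_smul_le {E : Type*} [NormedAddCommGroup E]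
    [NormedSpace ℝ E] {H : ℝ → E} {N : ℕ} {M : ℕ → ℝ} (n : ℕ) (hH : ContDiff ℝ N H)
    (hM : ∀ j ≤ N, ∀ k, ‖iteratedDeriv j H k‖ ≤ M j) :
    ∃ C, ∀ κ ∈ Set.Ioc (0 : ℝ) 1, ∀ k, κ ≤ |k| →
      ‖iteratedDerivWithin N (fun k => k ^ (-(n : ℤ)) • H k) {0}ᶜ k‖ ≤
        C * κ ^ (-((n + N : ℕ) : ℤ)) := by
  refine ⟨∑ i ∈ Finset.range (N + 1),
    (N.choose i : ℝ) * ‖∏ l ∈ Finset.range i, (Int.cast (-(n : ℤ)) - l : ℝ)‖ * M (N - i), ?_⟩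
  rintro κ ⟨hκ0, hκ1⟩ k hk
  have hs : IsOpen ({0}ᶜ : Set ℝ) := isOpen_compl_singleton
  have hk0 : k ∈ ({0}ᶜ : Set ℝ) := abs_pos.1 (hκ0.trans_le hk)
  rw [← norm_iteratedFDerivWithin_eq_norm_iteratedDerivWithin, Finset.sum_mul]
  refine (norm_iteratedFDerivWithin_smul_le (contDiffOn_zpow_neg n) hH.contDiffOn hs.uniqueDiffOn
    hk0 le_rfl).trans (Finset.sum_le_sum fun i hi => ?_)
  have hi : i ≤ N := Nat.lt_succ_iff.1 (Finset.mem_range.1 hi)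
  rw [norm_iteratedFDerivWithin_eq_norm_iteratedDerivWithin,
    norm_iteratedFDerivWithin_eq_norm_iteratedDerivWithin, iteratedDerivWithin_zpow _ _ hs hk0,
    iteratedDerivWithin_of_isOpen hs hk0, norm_mul, norm_zpow,
    show -(n : ℤ) - i = -((n + i : ℕ) : ℤ) by push_cast; ring]
  have hMnn : 0 ≤ M (N - i) := (norm_nonneg _).trans (hM _ (Nat.sub_le _ _) k)
  calc _ ≤ N.choose i * (‖∏ l ∈ Finset.range i, (Int.cast (-(n : ℤ)) - l : ℝ)‖ *
          κ ^ (-((n + N : ℕ) : ℤ))) * M (N - i) := by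
        gcongr
        · exact zpow_neg_le_of_le hκ0 hκ1 (by rwa [Real.norm_eq_abs]) (by omega)
        · exact hM _ (Nat.sub_le _ _) k
    _ = _ := by ring

/-- If `u ∈ Cⁿ(ℝ;ℝ)`, `n ≥ 1`, satisfies `|u^{(ℓ)}(x)| ≤ c_ℓ (1+|x|)^{-α-ℓ}` for `ℓ = 0,…,n`
and some `α > 0`, then `û ∈ C^{n-1}(ℝ \ {0})` and there is a constant `C` such that
`sup_{|k| ≥ κ} |û^{(n-1)}(k)| ≤ C κ^{-2n+1}` for every `κ ∈ (0,1]`. -/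
theorem stmt_1 (n : ℕ) (hn : 1 ≤ n) (α : ℝ) (hα : 0 < α) (u : ℝ → ℝ) (c : ℕ → ℝ)
    (hu : ContDiff ℝ n u)
    (hdecay : ∀ ℓ ≤ n, ∀ x : ℝ, |iteratedDeriv ℓ u x| ≤ c ℓ * (1 + |x|) ^ (-α - (ℓ : ℝ))) :
    ContDiffOn ℝ (n - 1 : ℕ) (fourierHat u) ({0}ᶜ : Set ℝ) ∧
    ∃ C : ℝ, ∀ κ ∈ Set.Ioc (0:ℝ) 1, ∀ k : ℝ, κ ≤ |k| →
      ‖iteratedDerivWithin (n - 1) (fourierHat u) ({0}ᶜ : Set ℝ) k‖ ≤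
        C * κ ^ (-(2 * (n : ℤ)) + 1) := by
  by_cases hint : Integrable u
  swap
  -- For `α ≤ 1` the function `u` need not be integrable; `fourierHat u` is then the junk value `0`.
  · rw [fourierHat_of_not_integrable hu.continuous.aestronglyMeasurable hint]
    exact ⟨contDiffOn_const, 0, fun κ _ k _ => by simp⟩
  have hderiv : ∀ m ≤ n, Integrable (iteratedDeriv m u) := by
    intro m hm
    rcases m.eq_zero_or_pos with rfl | hm0
    · simpa using hint
    · have : (1 : ℝ) ≤ m := by exact_mod_cast hm0
      simpa using integrable_pow_mul_iteratedDeriv hu hdecay hm (j := 0) (by push_cast; linarith)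
  have hmoment : ∀ j ≤ n - 1, Integrable (fun x => x ^ j * iteratedDeriv n u x) := fun j hj =>
    integrable_pow_mul_iteratedDeriv hu hdecay le_rfl (by
      have : (j : ℝ) + 1 ≤ n := by exact_mod_cast (by omega : j + 1 ≤ n)
      linarith)
  set H : ℝ → ℂ := fun k => (I ^ n)⁻¹ * fourierHat (iteratedDeriv n u) k
  have hfourier := fourierHat_eqOn_zpow_smul hu hderiv
  have hH : ContDiff ℝ (n - 1 : ℕ) H := contDiff_const.mul (contDiff_fourierHat hmoment)
  obtain ⟨C, hC⟩ := exists_norm_iteratedDerivWithin_zpow_smul_le n hH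
    (M := fun j => ‖(I ^ n)⁻¹‖ * (1 / √(2 * π) * ∫ x, |x ^ j * iteratedDeriv n u x|))
    fun j hj k => by
      simp only [H, iteratedDeriv_const_mul_field, norm_mul]
      gcongr
      exact norm_iteratedDeriv_fourierHat_le hmoment hj k
  refine ⟨((contDiffOn_zpow_neg n).smul hH.contDiffOn).congr hfourier, C, fun κ hκ k hk => ?_⟩
  have hk0 : k ∈ ({0}ᶜ : Set ℝ) := abs_pos.1 (hκ.1.trans_le hk)
  rw [iteratedDerivWithin_congr hfourier hk0,
    show -(2 * (n : ℤ)) + 1 = -((n + (n - 1) : ℕ) : ℤ) by omega]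
  exact hC κ hκ k hk
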